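/- Let p be a prime, n ≥ 1, and let F = GF(p^n) be the field with p^n elements. Let A(n, p) be the group of all 3 × 3 lower unitriangular matrices V(a, b, c) over F with entry a in position (2,1), b in position (3,1), c in position (3,2), and 1's on the diagonal, for a, b, c ∈ F, under matrix multiplication. Then the Laplacian spectrum of the non-commuting graph 𝒜_{A(n, p)} is {0^1, (p^{3n} − p^{2n})^{p^{3n} − 2p^n − 1}, (p^{3n} − p^n)^{p^n}}. -/

import Mathlib

/-!
Write `x = V (a, b, c)`. Two elements commute iff `c a' = c' a`, i.e. iff their `(a, c)`-parts
are proportional, and the centre is `{a = c = 0}`. So the non-commuting graph is the complete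
multipartite graph whose parts are the fibres of `x ↦ [a : c] ∈ ℙ¹(F)`: `q + 1` parts of
`(q - 1) q` vertices each, where `q = |F|`.

For a complete multipartite graph with `k` parts of size `m`, the adjacency matrix is
`P (J - I) Pᵀ` with `P` the incidence matrix of the parts, and `Pᵀ P = m • 1`. Moving `P`
across (`charpoly (P B) = X ^ _ * charpoly (B P)`) reduces the Laplacian
`(k - 1) m • 1 - P (J - I) Pᵀ` to the `k × k` matrix `m • (J - I)`, whose spectrum is read
off from the rank-one matrix `J`.
This gives `X (X - (k - 1) m) ^ (k (m - 1)) (X - k m) ^ (k - 1)`.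
-/

open Polynomial

/-- The non-commuting graph of a group `G`: vertices are the non-central elements,
two vertices adjacent iff they do not commute. -/
def nonCommGraph (G : Type*) [Group G] : SimpleGraph {x : G // x ∉ Subgroup.center G} where
  Adj x y := ¬ Commute (x : G) (y : G)
  symm := ⟨fun _ _ h hc => h hc.symm⟩
  loopless := ⟨fun _ h => h (Commute.refl _)⟩

/-- The Laplacian matrix of the non-commuting graph, over `ℝ`. -/
noncomputable def ncLap (G : Type*) [Group G] [Fintype G] :
    Matrix {x : G // x ∉ Subgroup.center G} {x : G // x ∉ Subgroup.center G} ℝ :=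
  letI := Classical.decEq G
  letI : DecidablePred (fun x : G => x ∉ Subgroup.center G) := fun _ => Classical.dec _
  letI : DecidableRel (nonCommGraph G).Adj := fun _ _ => Classical.dec _
  (nonCommGraph G).lapMatrix ℝ

/-- The characteristic polynomial of the Laplacian matrix of the non-commuting graph. -/
noncomputable def ncCharpoly (G : Type*) [Group G] [Fintype G] : Polynomial ℝ :=
  letI := Classical.decEq G
  letI : DecidablePred (fun x : G => x ∉ Subgroup.center G) := fun _ => Classical.dec _
  (ncLap G).charpoly

/-- The non-commuting graph of `G` is L-integral: every eigenvalue of its Laplacian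
matrix is an integer. -/
def ncLIntegral (G : Type*) [Group G] [Fintype G] : Prop :=
  letI := Classical.decEq G
  letI : DecidablePred (fun x : G => x ∉ Subgroup.center G) := fun _ => Classical.dec _
  ∀ μ ∈ spectrum ℝ (ncLap G), ∃ k : ℤ, μ = (k : ℝ)


open Matrix Finset
open scoped LinearAlgebra.Projectivization

theorem Fintype.card_eq_mul_of_card_fiber {V K : Type*} [Fintype V] [Fintype K] [DecidableEq K]
    {f : V → K} {m : ℕ} (hf : ∀ i, #{v | f v = i} = m) : card V = card K * m := by
  rw [← Finset.card_univ (α := V),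
    card_eq_sum_card_fiberwise (f := f) (t := univ) fun _ _ => mem_univ _]
  simp only [hf, sum_const, card_univ, smul_eq_mul]

section

variable {R V K : Type*} [CommRing R] [Fintype V] [DecidableEq V] [Fintype K] [DecidableEq K]

theorem Matrix.charpoly_submatrix_of_card_fiber {f : V → K} {m : ℕ} (hm : 0 < m)
    (hf : ∀ i, #{v | f v = i} = m) (M : Matrix K K R) :
    (M.submatrix f f).charpoly =
      X ^ (Fintype.card V - Fintype.card K) * ((m : R) • M).charpoly := by
  let P : Matrix V K R := of fun v i => if f v = i then 1 else 0
  have hsub : M.submatrix f f = P * (M * Pᵀ) := by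
    ext v w
    simp [P, mul_apply]
  have hPP : Pᵀ * P = (m : R) • 1 := by
    ext i j
    simp only [P, mul_apply, transpose_apply, of_apply, mul_ite, mul_one, mul_zero, ← ite_and]
    by_cases hij : i = j
    · subst hij
      simp [← hf i]
    · rw [Finset.sum_eq_zero fun v _ => if_neg ?_]
      · simp [hij]
      rintro ⟨hi, hj⟩
      exact hij (by rw [← hi, ← hj])
  have hle : Fintype.card K ≤ Fintype.card V := by
    rw [Fintype.card_eq_mul_of_card_fiber hf]
    exact Nat.le_mul_of_pos_right _ hm
  rw [hsub, charpoly_mul_comm_of_le _ _ hle, Matrix.mul_assoc, hPP, Matrix.mul_smul,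
    Matrix.mul_one]

theorem SimpleGraph.charpoly_smul_adjMatrix_top [Nonempty K] (c : R) :
    (c • (⊤ : SimpleGraph K).adjMatrix R).charpoly =
      (X + C c) ^ (Fintype.card K - 1) * (X - C (((Fintype.card K : R) - 1) * c)) := by
  have hJ : c • (⊤ : SimpleGraph K).adjMatrix R =
      vecMulVec (fun _ => c) (fun _ => 1) - scalar K c := by
    ext i j
    by_cases hij : i = j <;> simp [hij, vecMulVec_apply]
  obtain ⟨k, hk⟩ : ∃ k, Fintype.card K = k + 1 :=
    Nat.exists_eq_succ_of_ne_zero Fintype.card_ne_zero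
  rw [hJ, charpoly_sub_scalar, charpoly_vecMulVec]
  simp only [hk, pow_succ, dotProduct, mul_one, sum_const, card_univ, nsmul_eq_mul, Nat.cast_add,
    Nat.cast_one, add_tsub_cancel_right, smul_eq_C_mul, map_mul, map_add, map_natCast, map_one,
    sub_comp, mul_comp, pow_comp, X_comp, add_comp, natCast_comp, one_comp, C_comp,
    add_sub_cancel_right]
  ring

end

namespace SimpleGraph

variable {R V K : Type*} [CommRing R] [Fintype V] [DecidableEq V] [Fintype K] [DecidableEq K]
  {H : SimpleGraph V} [DecidableRel H.Adj] {f : V → K} {m : ℕ}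

theorem degree_eq_of_adj_iff_ne (hH : ∀ v w, H.Adj v w ↔ f v ≠ f w)
    (hf : ∀ i, #{v | f v = i} = m) (v : V) : H.degree v = (Fintype.card K - 1) * m := by
  rw [← card_neighborFinset_eq_degree, neighborFinset_eq_filter]
  simp only [hH, ne_comm (a := f v), ne_eq]
  rw [filter_not, card_univ_sdiff, hf, Nat.sub_one_mul, Fintype.card_eq_mul_of_card_fiber hf]

theorem lapMatrix_eq_of_adj_iff_ne (hH : ∀ v w, H.Adj v w ↔ f v ≠ f w)
    (hf : ∀ i, #{v | f v = i} = m) :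
    H.lapMatrix R = (-(⊤ : SimpleGraph K).adjMatrix R).submatrix f f
      - scalar V (-(((Fintype.card K : R) - 1) * m)) := by
  ext v w
  by_cases hvw : v = w
  · subst hvw
    have : Nonempty K := ⟨f v⟩
    simp [lapMatrix, degMatrix, degree_eq_of_adj_iff_ne hH hf, Nat.cast_pred Fintype.card_pos]
  · by_cases hf' : f v = f w <;> simp [lapMatrix, degMatrix, hvw, hf', hH]

theorem charpoly_lapMatrix_of_adj_iff_ne [Nonempty K] (hm : 0 < m)
    (hH : ∀ v w, H.Adj v w ↔ f v ≠ f w) (hfib : ∀ i, Nat.card {v // f v = i} = m) :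
    (H.lapMatrix R).charpoly =
      X * (X - C (((Fintype.card K : R) - 1) * m)) ^ (Fintype.card K * (m - 1))
        * (X - C ((Fintype.card K : R) * m)) ^ (Fintype.card K - 1) := by
  have hf : ∀ i, #{v | f v = i} = m := fun i => by
    rw [← Fintype.card_subtype, ← Nat.card_eq_fintype_card, hfib]
  rw [lapMatrix_eq_of_adj_iff_ne hH hf, charpoly_sub_scalar,
    charpoly_submatrix_of_card_fiber hm hf, smul_neg, ← neg_smul, charpoly_smul_adjMatrix_top,
    Fintype.card_eq_mul_of_card_fiber hf, ← Nat.mul_sub_one]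
  simp only [mul_comp, pow_comp, X_comp, add_comp, sub_comp, C_comp]
  simp only [map_mul, map_sub, map_neg, map_natCast, map_one]
  ring

end SimpleGraph

namespace Projectivization

theorem mk_eq_mk_iff_mul_eq_mul {F : Type*} [Field F] (v w : F × F) (hv : v ≠ 0) (hw : w ≠ 0) :
    mk F v hv = mk F w hw ↔ v.1 * w.2 = v.2 * w.1 := by
  rw [mk_eq_mk_iff']
  constructor
  · rintro ⟨t, rfl⟩
    simp only [Prod.smul_fst, Prod.smul_snd, smul_eq_mul]
    ring
  · obtain ⟨a, c⟩ := w
    intro h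
    by_cases ha : a = 0
    · have hc : c ≠ 0 := fun hc => hw (by simp [ha, hc])
      simp only [ha, mul_zero, mul_eq_zero, hc, or_false] at h
      exact ⟨v.2 / c, Prod.ext (by simp [ha, h]) (by simp [hc])⟩
    · refine ⟨v.1 / a, Prod.ext (by simp [ha]) ?_⟩
      simp only [Prod.smul_snd, smul_eq_mul]
      field_simp
      linear_combination h

theorem card_fiber_mk' {F W : Type*} [Field F] [AddCommGroup W] [Module F W] (L : ℙ F W) :
    Nat.card {v : {v : W // v ≠ 0} // mk' F v = L} = Nat.card Fˣ := by
  rw [Nat.card_congr ((nonZeroEquivProjectivizationProdUnits F W).subtypeEquiv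
      (p := fun v => mk' F v = L) (q := fun x => x.1 = L) fun v => Iff.rfl),
    Nat.card_congr (Equiv.prodSubtypeFstEquivSubtypeProd (p := (· = L))), Nat.card_prod,
    Nat.card_unique, one_mul]

end Projectivization

def IsHeisenbergChart {F G : Type*} [Add F] [Mul F] [Mul G] (V : F × F × F ≃ G) : Prop :=
  ∀ a b c a' b' c' : F, V (a, b, c) * V (a', b', c') = V (a + a', b + b' + c * a', c + c')

/-- The pair `(a, c)` of `x = V (a, b, c)`: the image of `x` in `G ⧸ Z(G) ≅ F × F`. -/
def quotientCoords {F G : Type*} (V : F × F × F ≃ G) (x : G) : F × F :=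
  ((V.symm x).1, (V.symm x).2.2)

namespace IsHeisenbergChart

section CommRing

variable {F G : Type*} [CommRing F] [Group G] {V : F × F × F ≃ G}

theorem commute_iff (hV : IsHeisenbergChart V) (x y : G) :
    Commute x y ↔ (quotientCoords V x).1 * (quotientCoords V y).2 =
      (quotientCoords V x).2 * (quotientCoords V y).1 := by
  obtain ⟨⟨a, b, c⟩, rfl⟩ := V.surjective x
  obtain ⟨⟨a', b', c'⟩, rfl⟩ := V.surjective y
  simp only [Commute, SemiconjBy, hV (a := a), hV (a := a'), V.apply_eq_iff_eq, Prod.mk.injEq,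
    quotientCoords, Equiv.symm_apply_apply]
  constructor
  · rintro ⟨-, h, -⟩
    linear_combination -h
  · intro h
    exact ⟨add_comm _ _, by linear_combination -h, add_comm _ _⟩

theorem mem_center_iff (hV : IsHeisenbergChart V) (x : G) :
    x ∈ Subgroup.center G ↔ quotientCoords V x = 0 := by
  simp only [Subgroup.mem_center_iff, ← commute_iff_eq, hV.commute_iff]
  refine ⟨fun h => ?_, fun h g => by simp [h]⟩
  have h1 := h (V (1, 0, 0))
  have h2 := h (V (0, 0, 1))
  simp only [quotientCoords, Equiv.symm_apply_apply, one_mul, zero_mul] at h1 h2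
  exact Prod.ext h2.symm h1

def nonCentralEquiv (hV : IsHeisenbergChart V) :
    {x : G // x ∉ Subgroup.center G} ≃ {v : F × F // v ≠ 0} × F where
  toFun x := (⟨quotientCoords V x, (hV.mem_center_iff x).not.mp x.2⟩, (V.symm x).2.1)
  invFun w := ⟨V (w.1.1.1, w.2, w.1.1.2), by
    simpa [hV.mem_center_iff, quotientCoords] using w.1.2⟩
  left_inv x := by ext; simp [quotientCoords]
  right_inv w := by ext <;> simp [quotientCoords]

end CommRing

section Field

variable {F G : Type*} [Field F] [Group G] {V : F × F × F ≃ G}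

def line (hV : IsHeisenbergChart V) (x : {x : G // x ∉ Subgroup.center G}) : ℙ F (F × F) :=
  Projectivization.mk' F (hV.nonCentralEquiv x).1

theorem nonCommGraph_adj_iff (hV : IsHeisenbergChart V)
    (x y : {x : G // x ∉ Subgroup.center G}) :
    (nonCommGraph G).Adj x y ↔ hV.line x ≠ hV.line y := by
  simp only [nonCommGraph, line, Projectivization.mk'_eq_mk, ne_eq,
    Projectivization.mk_eq_mk_iff_mul_eq_mul, hV.commute_iff]
  rfl

theorem card_line_fiber (hV : IsHeisenbergChart V) (L : ℙ F (F × F)) :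
    Nat.card {x // hV.line x = L} = Nat.card Fˣ * Nat.card F := by
  rw [Nat.card_congr (hV.nonCentralEquiv.subtypeEquiv (p := fun x => hV.line x = L)
      (q := fun w => Projectivization.mk' F w.1 = L) fun x => Iff.rfl),
    Nat.card_congr (Equiv.prodSubtypeFstEquivSubtypeProd
      (p := fun v => Projectivization.mk' F v = L)),
    Nat.card_prod, Projectivization.card_fiber_mk']

end Field

end IsHeisenbergChart

theorem ncCharpoly_eq_charpoly_lapMatrix {G : Type*} [Group G] [Fintype G]
    [Fintype {x : G // x ∉ Subgroup.center G}] [DecidableEq {x : G // x ∉ Subgroup.center G}]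
    [DecidableRel (nonCommGraph G).Adj] :
    ncCharpoly G = ((nonCommGraph G).lapMatrix ℝ).charpoly := by
  unfold ncCharpoly ncLap
  congr!

theorem IsHeisenbergChart.ncCharpoly_eq {F G : Type*} [Field F] [Fintype F] [Group G] [Fintype G]
    {V : F × F × F ≃ G} (hV : IsHeisenbergChart V) :
    ncCharpoly G = X * (X - C ((Fintype.card F : ℝ) ^ 3 - (Fintype.card F : ℝ) ^ 2))
      ^ (Fintype.card F ^ 3 - 2 * Fintype.card F - 1)
      * (X - C ((Fintype.card F : ℝ) ^ 3 - Fintype.card F)) ^ Fintype.card F := by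
  classical
  let : Fintype (ℙ F (F × F)) := Fintype.ofFinite _
  have hk : Fintype.card (ℙ F (F × F)) = Fintype.card F + 1 := by
    rw [← Nat.card_eq_fintype_card, Projectivization.card_of_finrank_two F (F × F) (by simp),
      Nat.card_eq_fintype_card]
  have hfib : ∀ L, Nat.card {x // hV.line x = L} = (Fintype.card F - 1) * Fintype.card F := by
    intro L
    rw [hV.card_line_fiber, Nat.card_units, Nat.card_eq_fintype_card]
  have hm : 0 < (Fintype.card F - 1) * Fintype.card F :=
    Nat.mul_pos (Nat.sub_pos_of_lt Fintype.one_lt_card) Fintype.card_pos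
  rw [ncCharpoly_eq_charpoly_lapMatrix,
    SimpleGraph.charpoly_lapMatrix_of_adj_iff_ne hm hV.nonCommGraph_adj_iff hfib, hk]
  obtain ⟨r, hr⟩ : ∃ r, Fintype.card F = r + 2 := Nat.exists_eq_add_of_le' Fintype.one_lt_card
  have hpart : (r + 2 - 1) * (r + 2) = r * r + 3 * r + 1 + 1 := by
    rw [show r + 2 - 1 = r + 1 by omega]
    ring
  have hexp : (r + 2 + 1) * ((r + 2 - 1) * (r + 2) - 1) = (r + 2) ^ 3 - 2 * (r + 2) - 1 := by
    rw [hpart, Nat.add_sub_cancel,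
      show (r + 2) ^ 3 = (r + 2 + 1) * (r * r + 3 * r + 1) + 2 * (r + 2) + 1 by ring]
    generalize (r + 2 + 1) * (r * r + 3 * r + 1) = a
    omega
  rw [hr, hexp, Nat.add_sub_cancel, hpart]
  push_cast
  ring_nf

/-- Laplacian spectrum of the non-commuting graph of Hanaki's group
`A(n, p)` (the Heisenberg group over `GF(p^n)`), realized as any group `G` whose
elements are parametrized by triples `(a, b, c) ∈ GF(p^n)³` via a bijection `V`
satisfying `V(a, b, c) * V(a', b', c') = V(a + a', b + b' + c·a', c + c')`. -/
theorem laplacian_spectrum_nc_graph_Hanaki_A_n_p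
    (p n : ℕ) [Fact p.Prime] (hn : 1 ≤ n) (G : Type*) [Group G] [Fintype G]
    (V : GaloisField p n × GaloisField p n × GaloisField p n ≃ G)
    (hV : ∀ a b c a' b' c' : GaloisField p n,
      V (a, b, c) * V (a', b', c') = V (a + a', b + b' + c * a', c + c')) :
    ncCharpoly G =
      X *
      (X - C ((p : ℝ) ^ (3 * n) - (p : ℝ) ^ (2 * n))) ^ (p ^ (3 * n) - 2 * p ^ n - 1) *
      (X - C ((p : ℝ) ^ (3 * n) - (p : ℝ) ^ n)) ^ (p ^ n) := by
  let : Fintype (GaloisField p n) := Fintype.ofFinite _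
  have hq : Fintype.card (GaloisField p n) = p ^ n := by
    rw [← Nat.card_eq_fintype_card, GaloisField.card p n (by omega)]
  rw [IsHeisenbergChart.ncCharpoly_eq hV, hq]
  push_cast
  simp only [pow_mul']
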